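/- arXiv:2301.05483 — 6 statements merged into one kernel-verified Lean document; each statement's English description precedes it below -/
import Mathlib

section
/- Every formal polynomial P of degree n over the max-plus semifield R_max = (R ∪ {-∞}, max, +) has exactly n corners c_1 ≥ ... ≥ c_n (points where the maximum in the polynomial function is attained at least twice, counted with multiplicity, with -∞ counted to multiplicity equal to the lower degree), and the associated polynomial function factors uniquely as P̂(y) = P_n ⊙ (y ⊕ c_1) ⊙ ... ⊙ (y ⊕ c_n), i.e. P̂(y) = P_n + Σ_{i=1}^n max(y, c_i) for all y. -/
set_option linter.unusedVariables false

noncomputable section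

/-- The max-plus (tropical) semifield `R_max = ℝ ∪ {-∞}`, with addition `max`
and multiplication `+`. -/
abbrev RMax := WithBot ℝ

/-- The polynomial function `P̂(y) = max_{k ≤ n} (P_k + k·y)` of a formal
polynomial over `R_max` of degree at most `n`. -/
def tPhat (P : ℕ → RMax) (n : ℕ) (y : RMax) : RMax :=
  (Finset.range (n + 1)).sup fun k => P k + k • y

/-!
Existence is by induction on the degree `n + 1`. If `P_0 = ⋯ = P_n = -∞`, then
`P̂(y) = P_{n+1} + (n+1)·y` and all corners are `-∞`. Otherwise the largest corner is the
largest slope `c = max_j (P_j - P_{n+1}) / (n + 1 - j)`, and `P̂(y) = max(y, c) + Q̂(y)` for the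
tropical quotient `Q` of `P` by `y ⊕ c`, which has degree `n` and leading coefficient `P_{n+1}`.

Uniqueness: `Σᵢ max(r, cᵢ) = n·r` exactly when `r ≥ maxᵢ cᵢ`, so the function `r ↦ Σᵢ max(r, cᵢ)`
on real `r` determines the largest `cᵢ`; cancel it and induct.
-/

section tPhat

variable (P : ℕ → RMax) {n k : ℕ}

theorem le_tPhat (hk : k ≤ n) (y : RMax) : P k + k • y ≤ tPhat P n y :=
  Finset.le_sup (f := fun k => P k + k • y) (Finset.mem_range_succ_iff.mpr hk)

theorem tPhat_zero (y : RMax) : tPhat P 0 y = P 0 := by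
  simp [tPhat]

theorem tPhat_bot : tPhat P n ⊥ = P 0 := by
  refine le_antisymm (Finset.sup_le fun k _ => ?_) (by simpa using le_tPhat P (Nat.zero_le n) ⊥)
  cases k with
  | zero => simp
  | succ k => simp [succ_nsmul]

theorem tPhat_of_forall_lt_eq_bot (hP : ∀ k < n, P k = ⊥) (y : RMax) :
    tPhat P n y = P n + n • y := by
  refine le_antisymm (Finset.sup_le fun k hk => ?_) (le_tPhat P le_rfl y)
  rcases (Finset.mem_range_succ_iff.mp hk).lt_or_eq with hlt | rfl
  · simp [hP k hlt]
  · exact le_rfl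

end tPhat

/-- The `k`-th coefficient of the tropical power series `P ⊙ c⁻¹ ⊙ ⊕ᵢ (c⁻¹ ⊙ y)ⁱ`, i.e. of
`P / (y ⊕ c)` expanded at `y = -∞`. -/
def divByCorner (P : ℕ → RMax) (c : ℝ) (k : ℕ) : RMax :=
  (Finset.range (k + 1)).sup fun j => P j + ↑(((j : ℝ) - k - 1) * c)

section divByCorner

variable {P : ℕ → RMax} {n : ℕ} {p c : ℝ}

theorem le_divByCorner {j k : ℕ} (hjk : j ≤ k) :
    P j + ↑(((j : ℝ) - k - 1) * c) ≤ divByCorner P c k :=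
  Finset.le_sup (f := fun j => P j + ↑(((j : ℝ) - k - 1) * c)) (Finset.mem_range_succ_iff.mpr hjk)

theorem exists_eq_divByCorner (k : ℕ) :
    ∃ j ≤ k, divByCorner P c k = P j + ↑(((j : ℝ) - k - 1) * c) := by
  obtain ⟨j, hj, hmax⟩ := Finset.exists_mem_eq_sup (Finset.range (k + 1)) Finset.nonempty_range_add_one
    fun j => P j + ↑(((j : ℝ) - k - 1) * c)
  exact ⟨j, Finset.mem_range_succ_iff.mp hj, hmax⟩

theorem divByCorner_zero : divByCorner P c 0 = P 0 + ↑(-c) := by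
  simp only [divByCorner, zero_add, Finset.range_one, Finset.sup_singleton]
  norm_num

theorem divByCorner_top (hub : ∀ j ≤ n, P j ≤ ↑(p + ((n : ℝ) + 1 - j) * c))
    (hat : ∃ j ≤ n, P j = ↑(p + ((n : ℝ) + 1 - j) * c)) : divByCorner P c n = ↑p := by
  have hshift (j : ℕ) : p + ((n : ℝ) + 1 - j) * c + ((j : ℝ) - n - 1) * c = p := by ring
  refine le_antisymm (Finset.sup_le fun j hj => ?_) ?_
  · calc P j + ↑(((j : ℝ) - n - 1) * c)
        ≤ ↑(p + ((n : ℝ) + 1 - j) * c) + ↑(((j : ℝ) - n - 1) * c) :=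
          add_le_add_left (hub j (Finset.mem_range_succ_iff.mp hj)) _
      _ = ↑p := by rw [← WithBot.coe_add, hshift]
  · obtain ⟨j, hj, hPj⟩ := hat
    calc (p : RMax) = P j + ↑(((j : ℝ) - n - 1) * c) := by rw [hPj, ← WithBot.coe_add, hshift]
      _ ≤ divByCorner P c n := le_divByCorner hj

theorem max_add_le_tPhat (hp : P (n + 1) = ↑p) (hub : ∀ j ≤ n, P j ≤ ↑(p + ((n : ℝ) + 1 - j) * c))
    {j k : ℕ} (hjk : j ≤ k) (hkn : k ≤ n) (r : ℝ) :
    max ↑r ↑c + (P j + ↑(((j : ℝ) - k - 1) * c) + k • (r : RMax)) ≤ tPhat P (n + 1) ↑r := by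
  have hjk' : (j : ℝ) ≤ k := by exact_mod_cast hjk
  have hkn' : (k : ℝ) ≤ n := by exact_mod_cast hkn
  rw [← WithBot.coe_max, ← WithBot.coe_nsmul, nsmul_eq_mul, add_left_comm, add_assoc,
    ← WithBot.coe_add, ← WithBot.coe_add]
  rcases le_total r c with hrc | hcr
  · calc P j + ↑(((j : ℝ) - k - 1) * c + (max r c + k * r))
        ≤ P j + ↑(j * r) := by
          rw [max_eq_right hrc]
          refine add_le_add_right (WithBot.coe_le_coe.mpr ?_) _
          nlinarith [mul_nonneg (sub_nonneg.2 hjk') (sub_nonneg.2 hrc)]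
      _ = P j + j • (r : RMax) := by rw [← WithBot.coe_nsmul, nsmul_eq_mul]
      _ ≤ tPhat P (n + 1) ↑r := le_tPhat P (by omega) _
  · calc P j + ↑(((j : ℝ) - k - 1) * c + (max r c + k * r))
        ≤ ↑(p + ((n : ℝ) + 1 - j) * c) + ↑(((j : ℝ) - k - 1) * c + (max r c + k * r)) :=
          add_le_add_left (hub j (by omega)) _
      _ ≤ ↑(p + (n + 1) * r) := by
          rw [← WithBot.coe_add, max_eq_left hcr]
          exact WithBot.coe_le_coe.mpr (by nlinarith)
      _ = P (n + 1) + (n + 1) • (r : RMax) := by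
          rw [hp, ← WithBot.coe_nsmul, nsmul_eq_mul, ← WithBot.coe_add]
          push_cast
          ring_nf
      _ ≤ tPhat P (n + 1) ↑r := le_tPhat P le_rfl _

theorem tPhat_eq_max_add_tPhat_divByCorner (hp : P (n + 1) = ↑p)
    (hub : ∀ j ≤ n, P j ≤ ↑(p + ((n : ℝ) + 1 - j) * c)) (hQ : divByCorner P c n = ↑p)
    (y : RMax) : tPhat P (n + 1) y = max y ↑c + tPhat (divByCorner P c) n y := by
  cases y using WithBot.recBotCoe with
  | bot =>
    rw [tPhat_bot, tPhat_bot, divByCorner_zero, max_eq_right bot_le, add_left_comm,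
      ← WithBot.coe_add, add_neg_cancel, WithBot.coe_zero, add_zero]
  | coe r =>
    refine le_antisymm (Finset.sup_le fun k hk => ?_) ?_
    · rcases (Finset.mem_range_succ_iff.mp hk).lt_or_eq with hkn | rfl
      · calc P k + k • (r : RMax) = ↑c + (P k + ↑(((k : ℝ) - k - 1) * c)) + k • (r : RMax) := by
              have hc : c + ((k : ℝ) - k - 1) * c = 0 := by ring
              rw [add_left_comm, ← WithBot.coe_add, hc, WithBot.coe_zero, add_zero]
          _ ≤ max ↑r ↑c + (divByCorner P c k + k • (r : RMax)) := by
              rw [← add_assoc (max _ _)]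
              exact add_le_add_left (add_le_add (le_max_right _ _) (le_divByCorner le_rfl)) _
          _ ≤ max ↑r ↑c + tPhat (divByCorner P c) n ↑r :=
              add_le_add_right (le_tPhat _ (by omega) _) _
      · calc P (n + 1) + (n + 1) • (r : RMax) = ↑r + (divByCorner P c n + n • (r : RMax)) := by
              rw [hp, hQ, succ_nsmul]
              abel
          _ ≤ max ↑r ↑c + tPhat (divByCorner P c) n ↑r :=
              add_le_add (le_max_left _ _) (le_tPhat _ le_rfl _)
    · obtain ⟨k, hk, hmax⟩ := Finset.exists_mem_eq_sup (Finset.range (n + 1))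
        Finset.nonempty_range_add_one fun k => divByCorner P c k + k • (r : RMax)
      obtain ⟨j, hjk, hQk⟩ := exists_eq_divByCorner (P := P) (c := c) k
      rw [tPhat, hmax, hQk]
      exact max_add_le_tPhat hp hub hjk (Finset.mem_range_succ_iff.mp hk) r

end divByCorner

theorem exists_largest_corner (P : ℕ → RMax) (n : ℕ) (p : ℝ) (h : ∃ j ≤ n, P j ≠ ⊥) :
    ∃ c : ℝ, (∀ j ≤ n, P j ≤ ↑(p + ((n : ℝ) + 1 - j) * c)) ∧
      ∃ j ≤ n, P j = ↑(p + ((n : ℝ) + 1 - j) * c) := by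
  classical
  let S := (Finset.range (n + 1)).filter fun j => P j ≠ ⊥
  have hS {j : ℕ} : j ∈ S ↔ j ≤ n ∧ P j ≠ ⊥ := by simp [S]
  let slope (j : ℕ) : ℝ := ((P j).unbotD 0 - p) / ((n : ℝ) + 1 - j)
  have hslope {j : ℕ} {a : ℝ} (hPj : P j = ↑a) :
      slope j = (a - p) / ((n : ℝ) + 1 - j) := by simp [slope, hPj]
  have hpos {j : ℕ} (hj : j ≤ n) : (0 : ℝ) < n + 1 - j := by
    have : (j : ℝ) ≤ n := by exact_mod_cast hj
    linarith
  obtain ⟨j₀, hj₀, hmax⟩ := S.exists_max_image slope (h.imp fun j hj => hS.mpr hj)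
  obtain ⟨hj₀n, hPj₀⟩ := hS.mp hj₀
  obtain ⟨a₀, ha₀⟩ := WithBot.ne_bot_iff_exists.mp hPj₀
  refine ⟨slope j₀, fun j hj => ?_, j₀, hj₀n, ?_⟩
  · rcases eq_or_ne (P j) ⊥ with hb | hb
    · simp [hb]
    obtain ⟨a, ha⟩ := WithBot.ne_bot_iff_exists.mp hb
    have hle := hmax j (hS.mpr ⟨hj, hb⟩)
    rw [hslope ha.symm, div_le_iff₀ (hpos hj)] at hle
    rw [← ha, WithBot.coe_le_coe]
    linarith
  · rw [← ha₀, hslope ha₀.symm, WithBot.coe_inj, mul_div_cancel₀ _ (hpos hj₀n).ne']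
    ring

theorem exists_tPhat_eq_add_sum_max (n : ℕ) (P : ℕ → RMax) (hPn : P n ≠ ⊥) :
    ∃ c : Multiset RMax, Multiset.card c = n ∧
      ∀ y : RMax, tPhat P n y = P n + (c.map fun ci => max y ci).sum := by
  induction n generalizing P with
  | zero => exact ⟨0, rfl, fun y => by simp [tPhat_zero]⟩
  | succ n ih =>
    obtain ⟨p, hp⟩ := WithBot.ne_bot_iff_exists.mp hPn
    by_cases h : ∃ j ≤ n, P j ≠ ⊥
    · obtain ⟨c, hub, hat⟩ := exists_largest_corner P n p h
      have hQ := divByCorner_top hub hat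
      obtain ⟨d, hd, hfactor⟩ := ih (divByCorner P c) (hQ ▸ WithBot.coe_ne_bot)
      refine ⟨↑c ::ₘ d, by simp [hd], fun y => ?_⟩
      rw [tPhat_eq_max_add_tPhat_divByCorner hp.symm hub hQ, hfactor, hQ, ← hp,
        Multiset.map_cons, Multiset.sum_cons, add_left_comm]
    · push Not at h
      refine ⟨Multiset.replicate (n + 1) ⊥, Multiset.card_replicate _ _, fun y => ?_⟩
      rw [tPhat_of_forall_lt_eq_bot P (fun k hk => h k (Nat.le_of_lt_succ hk)),
        Multiset.map_replicate, Multiset.sum_replicate, max_eq_left bot_le]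

theorem max_coe_eq_coe_max_unbotD (r : ℝ) (x : RMax) :
    max (r : RMax) x = ↑(max r (x.unbotD r)) := by
  cases x using WithBot.recBotCoe <;> simp

theorem sum_map_max_coe (s : Multiset RMax) (r : ℝ) :
    (s.map fun x => max (r : RMax) x).sum = ↑((s.map fun x => max r (x.unbotD r)).sum) := by
  induction s using Multiset.induction with
  | empty => simp
  | cons x s ih =>
    rw [Multiset.map_cons, Multiset.map_cons, Multiset.sum_cons, Multiset.sum_cons, ih,
      max_coe_eq_coe_max_unbotD, WithBot.coe_add]

theorem sum_map_max_coe_eq_card_nsmul_iff (s : Multiset RMax) (r : ℝ) :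
    (s.map fun x => max (r : RMax) x).sum = Multiset.card s • (r : RMax) ↔ ∀ x ∈ s, x ≤ ↑r := by
  rw [sum_map_max_coe, ← WithBot.coe_nsmul, WithBot.coe_inj]
  constructor
  · intro h x hx
    by_contra! hrx
    obtain ⟨a, rfl⟩ := WithBot.ne_bot_iff_exists.mp (ne_bot_of_gt hrx)
    have hlt : (s.map fun _ => r).sum < (s.map fun x => max r (x.unbotD r)).sum :=
      Multiset.sum_lt_sum (fun x _ => le_max_left _ _)
        ⟨_, hx, by simpa using WithBot.coe_lt_coe.mp hrx⟩
    simp [h] at hlt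
  · intro h
    have hmax : ∀ x ∈ s, max r (x.unbotD r) = r := fun x hx => by
      cases x using WithBot.recBotCoe with
      | bot => simp
      | coe a => simpa using h _ hx
    simp [Multiset.map_congr rfl hmax]

theorem Multiset.eq_of_forall_sum_map_max_coe_eq {c d : Multiset RMax}
    (hcard : Multiset.card c = Multiset.card d)
    (h : ∀ r : ℝ, (c.map fun x => max (r : RMax) x).sum = (d.map fun x => max (r : RMax) x).sum) :
    c = d := by
  obtain ⟨n, hn⟩ : ∃ n, Multiset.card c = n := ⟨_, rfl⟩
  induction n generalizing c d with
  | zero => rw [Multiset.card_eq_zero.mp hn, Multiset.card_eq_zero.mp (hcard.symm.trans hn)]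
  | succ n ih =>
    have hmax_le_iff {s : Multiset RMax} {M : RMax} (hM : M ∈ s) (hsM : ∀ x ∈ s, x ≤ M) (r : ℝ) :
        M ≤ ↑r ↔ ∀ x ∈ s, x ≤ ↑r :=
      ⟨fun h x hx => (hsM x hx).trans h, fun h => h M hM⟩
    have hc0 : c ≠ 0 := Multiset.card_pos.mp (by omega)
    have hd0 : d ≠ 0 := Multiset.card_pos.mp (by omega)
    obtain ⟨M, hMc, hcM⟩ := Multiset.exists_max_image id hc0
    obtain ⟨N, hNd, hdN⟩ := Multiset.exists_max_image id hd0
    obtain rfl : M = N := WithBot.eq_of_forall_le_coe_iff fun r => by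
      rw [hmax_le_iff hMc hcM, hmax_le_iff hNd hdN, ← sum_map_max_coe_eq_card_nsmul_iff c,
        ← sum_map_max_coe_eq_card_nsmul_iff d, h r, hcard]
    rw [← Multiset.cons_erase hMc, ← Multiset.cons_erase hNd]
    congr 1
    refine ih ?_ (fun r => ?_) ?_
    · rw [Multiset.card_erase_of_mem hMc, Multiset.card_erase_of_mem hNd, hcard]
    · have hr := h r
      rw [← Multiset.cons_erase hMc, ← Multiset.cons_erase hNd] at hr
      simp only [Multiset.map_cons, Multiset.sum_cons] at hr
      exact WithBot.add_left_cancel (ne_bot_of_le_ne_bot WithBot.coe_ne_bot (le_max_left _ _)) hr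
    · rw [Multiset.card_erase_of_mem hMc, hn, Nat.pred_succ]

theorem rmax_fundamental_theorem_general (P : ℕ → RMax) (n : ℕ)
    (hPn : P n ≠ ⊥) :
    ∃! c : Multiset RMax, Multiset.card c = n ∧
      ∀ y : RMax, tPhat P n y = P n + (c.map fun ci => max y ci).sum := by
  obtain ⟨c, hcard, hc⟩ := exists_tPhat_eq_add_sum_max n P hPn
  refine ⟨c, ⟨hcard, hc⟩, fun d ⟨hdcard, hd⟩ => ?_⟩
  refine Multiset.eq_of_forall_sum_map_max_coe_eq (hdcard.trans hcard.symm) fun r => ?_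
  exact WithBot.add_left_cancel hPn ((hd r).symm.trans (hc r))

/-- Fundamental theorem of tropical algebra (Cuninghame-Green–Meijer): every
formal polynomial of degree `n` over `R_max` has exactly `n` corners
`c₁ ≥ ⋯ ≥ c_n` (counted with multiplicity) and its polynomial function factors
uniquely as `P̂(y) = P_n ⊙ (y ⊕ c₁) ⊙ ⋯ ⊙ (y ⊕ c_n)`, i.e.
`P̂(y) = P_n + Σᵢ max(y, cᵢ)`: the multiset of the `cᵢ` exists and is unique. -/
theorem rmax_fundamental_theorem (P : ℕ → RMax) (n : ℕ)
    (hPn : P n ≠ ⊥) (hdeg : ∀ k, n < k → P k = ⊥) :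
    ∃! c : Multiset RMax, Multiset.card c = n ∧
      ∀ y : RMax, tPhat P n y = P n + (c.map fun ci => max y ci).sum :=
  rmax_fundamental_theorem_general P n hPn
end
end

section
/- Let P be a formal polynomial over R_max of degree n and lower degree m with full support (P_k ≠ -∞ for m ≤ k ≤ n). Then P equals its own concave hull (the coefficient map k ↦ P_k restricted to [m,n] is concave, i.e. P_{k} - P_{k-1} ≥ P_{k+1} - P_k for m < k < n) if and only if P factors as a product of linear formal polynomials: P = P_n (Y ⊕ c_1) ⋯ (Y ⊕ c_n) where c_i = P_{n-i} - P_{n-i+1} for 1 ≤ i ≤ n-m and c_i = -∞ otherwise. -/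
/-!
Multiplying by `Y ⊕ d` sends `Q` to `k ↦ max (d + Q_k) Q_{k-1}`, so the coefficient of `Y ^ k`
in `c (Y ⊕ d₁) ⋯ (Y ⊕ dₗ)` is `c` plus the largest sum of `l - k` of the `dᵢ`; when
`d₁ ≥ ⋯ ≥ dₗ` it is `c + d₁ + ⋯ + d_{l-k}`. The roots `c_i = P_{n-i} - P_{n-i+1}` are the
negated slopes of `k ↦ P_k`, so they are nonincreasing exactly when `P` is concave, and then
these partial sums telescope to `P_k - P_n`. Conversely, a factorisation gives
`P_k ≥ P_n + c₁ + ⋯ + c_{n-k-1} + c_{n-k+1} = P_{k+1} + P_{k-1} - P_k`, which is concavity at `k`.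
-/

set_option linter.unusedVariables false

noncomputable section

/-- The formal linear polynomial `Y ⊕ c` over `R_max`. -/
def rLin (c : RMax) : ℕ → RMax :=
  fun k => if k = 0 then c else if k = 1 then ((0 : ℝ) : RMax) else ⊥

/-- Constant formal polynomial over `R_max`. -/
def rConst (c : RMax) : ℕ → RMax := fun k => if k = 0 then c else ⊥

/-- Max-plus Cauchy product of formal polynomials. -/
def rMul (P Q : ℕ → RMax) : ℕ → RMax :=
  fun k => (Finset.range (k + 1)).sup fun i => P i + Q (k - i)

/-- The formal polynomial `c ⊙ (Y ⊕ d₁) ⋯ (Y ⊕ d_n)`. -/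
def rProdLin (c : RMax) : List RMax → ℕ → RMax
  | [] => rConst c
  | d :: ds => rMul (rLin d) (rProdLin c ds)

theorem rMul_rLin_zero (d : RMax) (Q : ℕ → RMax) : rMul (rLin d) Q 0 = d + Q 0 := by
  simp [rMul, rLin]

theorem rMul_rLin_succ (d : RMax) (Q : ℕ → RMax) (k : ℕ) :
    rMul (rLin d) Q (k + 1) = max (d + Q (k + 1)) (Q k) := by
  unfold rMul
  apply le_antisymm
  · refine Finset.sup_le fun i _ => ?_
    match i with
    | 0 => simp [rLin]
    | 1 => simp [rLin]
    | i + 2 => simp [rLin]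
  · apply max_le
    · simpa [rLin] using Finset.le_sup (f := fun i => rLin d i + Q (k + 1 - i))
        (Finset.mem_range.mpr (Nat.succ_pos (k + 1)))
    · simpa [rLin] using Finset.le_sup (f := fun i => rLin d i + Q (k + 1 - i))
        (Finset.mem_range.mpr (by omega : 1 < k + 1 + 1))

theorem rProdLin_eq_bot_of_length_lt (c : RMax) {ds : List RMax} {k : ℕ} (hk : ds.length < k) :
    rProdLin c ds k = ⊥ := by
  induction ds generalizing k with
  | nil =>
    obtain ⟨k, rfl⟩ := Nat.exists_eq_add_one_of_ne_zero hk.ne'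
    simp [rProdLin, rConst]
  | cons d t ih =>
    obtain ⟨k, rfl⟩ := Nat.exists_eq_add_one_of_ne_zero (Nat.ne_zero_of_lt hk)
    rw [List.length_cons, Nat.add_lt_add_iff_right] at hk
    rw [rProdLin, rMul_rLin_succ, ih (hk.trans k.lt_succ_self), ih hk]
    simp

theorem rProdLin_eq_add_sum_take (c : RMax) {ds : List RMax} (hds : ds.Pairwise (· ≥ ·))
    {k : ℕ} (hk : k ≤ ds.length) : rProdLin c ds k = c + (ds.take (ds.length - k)).sum := by
  induction ds generalizing k with
  | nil =>
    obtain rfl : k = 0 := by simpa using hk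
    simp [rProdLin, rConst]
  | cons d t ih =>
    obtain ⟨hd, ht⟩ := List.pairwise_cons.mp hds
    rcases k with _ | k
    · simp [rProdLin, rMul_rLin_zero, ih ht (Nat.zero_le _), add_left_comm]
    rw [rProdLin, rMul_rLin_succ]
    rcases (Nat.le_of_lt_succ hk).lt_or_eq with hlt | rfl
    · obtain ⟨j, hj⟩ : ∃ j, t.length - (k + 1) = j := ⟨_, rfl⟩
      have hjt : j < t.length := by omega
      rw [ih ht hlt, ih ht hlt.le, hj, show t.length - k = j + 1 by omega,
        List.length_cons, show t.length + 1 - (k + 1) = j + 1 by omega, List.take_succ_cons,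
        List.sum_cons, List.sum_take_succ t j hjt]
      have hdj : t[j] ≤ d := hd _ (List.getElem_mem hjt)
      rw [max_eq_left (by rw [← add_assoc, add_comm d]; gcongr), add_left_comm]
    · rw [rProdLin_eq_bot_of_length_lt c (Nat.lt_succ_self _), ih ht le_rfl]
      simp

theorem add_sum_le_rProdLin_of_sublist (c : RMax) {s ds : List RMax} (hs : s.Sublist ds)
    {k : ℕ} (hk : s.length + k = ds.length) : c + s.sum ≤ rProdLin c ds k := by
  induction hs generalizing k with
  | slnil =>
    obtain rfl : k = 0 := by simpa using hk
    simp [rProdLin, rConst]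
  | @cons s t d hst ih =>
    simp only [List.length_cons] at hk
    obtain ⟨k, rfl⟩ : ∃ k', k = k' + 1 := ⟨k - 1, by have := hst.length_le; omega⟩
    rw [rProdLin, rMul_rLin_succ]
    exact (ih (by omega)).trans (le_max_right _ _)
  | @cons_cons s t d _ ih =>
    simp only [List.length_cons] at hk
    rw [List.sum_cons, add_left_comm]
    rcases k with _ | k
    · rw [rProdLin, rMul_rLin_zero]
      exact add_le_add_right (ih (k := 0) (by omega)) d
    · rw [rProdLin, rMul_rLin_succ]
      exact (add_le_add_right (ih (k := k + 1) (by omega)) d).trans (le_max_left _ _)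

theorem List.range_append_singleton_succ_sublist {j N : ℕ} (h : j + 2 ≤ N) :
    (List.range j ++ [j + 1]).Sublist (List.range N) := by
  have hskip : (List.range j ++ [j + 1]).Sublist (List.range (j + 2)) := by
    rw [List.range_succ, List.range_succ, List.append_assoc]
    exact (List.sublist_cons_self _ _).append_left _
  exact hskip.trans (List.range_sublist.mpr h)

/-- `tropRoot p m n i` is the root `c_{i+1}` of the factorisation (roots indexed from `0`). -/
def tropRoot (p : ℕ → ℝ) (m n i : ℕ) : RMax :=
  if i + 1 ≤ n - m then ((p (n - (i + 1)) - p (n - (i + 1) + 1) : ℝ) : RMax) else ⊥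

section tropRoot

variable {p : ℕ → ℝ} {m n : ℕ}

theorem tropRoot_of_le {i : ℕ} (hi : i + 1 ≤ n - m) :
    tropRoot p m n i = ((p (n - (i + 1)) - p (n - i) : ℝ) : RMax) := by
  rw [tropRoot, if_pos hi, show n - (i + 1) + 1 = n - i by omega]

theorem tropRoot_eq_bot {i : ℕ} (hi : ¬i + 1 ≤ n - m) : tropRoot p m n i = ⊥ :=
  if_neg hi

theorem sum_map_tropRoot_range (j : ℕ) :
    ((List.range j).map (tropRoot p m n)).sum =
      if j ≤ n - m then ((p (n - j) - p n : ℝ) : RMax) else ⊥ := by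
  induction j with
  | zero => simp
  | succ j ih =>
    rw [List.range_succ, List.map_append, List.sum_append, ih, List.map_singleton,
      List.sum_singleton]
    by_cases hj : j + 1 ≤ n - m
    · rw [if_pos (by omega), if_pos hj, tropRoot_of_le hj, ← WithBot.coe_add]
      congr 1
      ring
    · rw [if_neg hj, tropRoot_eq_bot hj, WithBot.add_bot]

theorem pairwise_ge_map_tropRoot (hp : AntitoneOn (fun k => p (k + 1) - p k) (Set.Ico m n))
    (N : ℕ) : ((List.range N).map (tropRoot p m n)).Pairwise (· ≥ ·) := by
  rw [List.pairwise_map]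
  refine List.pairwise_lt_range.imp fun {i j} hij => ?_
  by_cases hj : j + 1 ≤ n - m
  · have hslope := hp (a := n - (j + 1)) (b := n - (i + 1)) ⟨by omega, by omega⟩
      ⟨by omega, by omega⟩ (by omega)
    rw [tropRoot_of_le hj, tropRoot_of_le (by omega), ge_iff_le, WithBot.coe_le_coe]
    simp only [show n - (j + 1) + 1 = n - j by omega, show n - (i + 1) + 1 = n - i by omega]
      at hslope
    linarith
  · rw [tropRoot_eq_bot hj]
    exact bot_le

theorem rProdLin_tropRoot_of_antitoneOn (hmn : m ≤ n)
    (hp : AntitoneOn (fun k => p (k + 1) - p k) (Set.Ico m n)) (k : ℕ) :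
    rProdLin (p n) ((List.range n).map (tropRoot p m n)) k =
      if m ≤ k ∧ k ≤ n then ((p k : ℝ) : RMax) else ⊥ := by
  have hlen : ((List.range n).map (tropRoot p m n)).length = n := by simp
  rcases le_or_gt k n with hk | hk
  · rw [rProdLin_eq_add_sum_take _ (pairwise_ge_map_tropRoot hp n) (hlen.symm ▸ hk), hlen,
      ← List.map_take, List.take_range, min_eq_left (Nat.sub_le n k), sum_map_tropRoot_range]
    by_cases hmk : m ≤ k
    · rw [if_pos (by omega), if_pos ⟨hmk, hk⟩, ← WithBot.coe_add, Nat.sub_sub_self hk]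
      congr 1
      ring
    · rw [if_neg (by omega), if_neg (by omega), WithBot.add_bot]
  · rw [rProdLin_eq_bot_of_length_lt _ (hlen.symm ▸ hk), if_neg (by omega)]

theorem slope_le_of_rProdLin_tropRoot_le {k : ℕ} (hmk : m < k) (hkn : k < n)
    (hk : rProdLin (p n) ((List.range n).map (tropRoot p m n)) k ≤ ((p k : ℝ) : RMax)) :
    p (k + 1) - p k ≤ p k - p (k - 1) := by
  -- `P_k` dominates the term `P_n + c₁ + ⋯ + c_{n-k-1} + c_{n-k+1}` that skips `c_{n-k}`.
  obtain ⟨j, hj⟩ : ∃ j, j = n - k - 1 := ⟨_, rfl⟩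
  have hle := (add_sum_le_rProdLin_of_sublist (p n)
    ((List.range_append_singleton_succ_sublist (j := j) (N := n) (by omega)).map
      (tropRoot p m n)) (k := k) (by simp; omega)).trans hk
  rw [List.map_append, List.sum_append, sum_map_tropRoot_range, if_pos (by omega),
    List.map_singleton, List.sum_singleton, tropRoot_of_le (by omega), show n - j = k + 1 by omega,
    show n - (j + 1 + 1) = k - 1 by omega, show n - (j + 1) = k by omega] at hle
  norm_cast at hle
  linarith

end tropRoot

/-- A formal polynomial over `R_max` of degree `n` and lower degree `m` with
full support equals its own concave hull (coefficientwise concavity) if and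
only if it factors as the product of linear formal polynomials
`P = P_n (Y ⊕ c₁) ⋯ (Y ⊕ c_n)` with `c_i = P_{n-i} - P_{n-i+1}` for
`1 ≤ i ≤ n - m` and `c_i = -∞` otherwise. -/
theorem rmax_concave_iff_factors (p : ℕ → ℝ) (m n : ℕ) (hmn : m ≤ n)
    (P : ℕ → RMax) (hP : ∀ k, P k = if m ≤ k ∧ k ≤ n then ((p k : ℝ) : RMax) else ⊥) :
    (∀ k, m < k → k < n → p (k + 1) - p k ≤ p k - p (k - 1)) ↔
      P = rProdLin (P n)
        ((List.range n).map fun i =>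
          if i + 1 ≤ n - m
          then ((p (n - (i + 1)) - p (n - (i + 1) + 1) : ℝ) : RMax)
          else ⊥) := by
  change _ ↔ P = rProdLin (P n) ((List.range n).map (tropRoot p m n))
  have hPn : P n = ((p n : ℝ) : RMax) := by simp [hP, hmn]
  constructor
  · intro hconc
    have hanti : AntitoneOn (fun k => p (k + 1) - p k) (Set.Ico m n) :=
      antitoneOn_of_add_one_le Set.ordConnected_Ico fun a _ ha ha1 => by
        simpa using hconc (a + 1) (by simp at ha; omega) (by simp at ha1; omega)
    funext k
    rw [hPn, hP, rProdLin_tropRoot_of_antitoneOn hmn hanti]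
  · intro hfac k hmk hkn
    refine slope_le_of_rProdLin_tropRoot_le hmk hkn ?_
    rw [← hPn, ← hfac, hP, if_pos ⟨hmk.le, hkn.le⟩]
end
end

section
/- For a nonzero formal polynomial P over R_max, the canonical form P^c (defined by P^c_k = inf_y (P̂(y) - ky)) coincides with the concave hull P^♯, where P^♯_k = max{(1-t)P_i + t P_j : i,j ∈ N, t ∈ Q ∩ [0,1], (1-t)i + tj = k}. -/
/-
Canonical form and concave hull are the two sides of linear-programming duality in one
variable. Every convex combination `(1-t) P_i + t P_j` with `(1-t) i + t j = k` lies below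
`P̂(y) - k y` for every slope `y`, since `P̂(y)` dominates both `P_i + i y` and `P_j + j y`.
Conversely, if `s` bounds all these combinations, the constraints `P_i + (i - k) y ≤ s` on `y`
are lower bounds for `i < k` and upper bounds for `i > k`, and each lower bound lies below each
upper bound exactly because `(j - k) P_i + (k - i) P_j ≤ (j - i) s`; a slope between them gives
`P̂(y) - k y ≤ s`.
-/

set_option linter.unusedVariables false

noncomputable section

/-- The convex combination `(1-t)·a + t·b` in `R_max`, equal to `⊥` if either
argument is `⊥`. -/
def convexComb (t : ℝ) (a b : RMax) : RMax :=
  WithBot.recBotCoe ⊥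
    (fun x => WithBot.recBotCoe ⊥
      (fun z => (((1 - t) * x + t * z : ℝ) : RMax)) b) a

lemma convexComb_bot_right (t : ℝ) (a : RMax) : convexComb t a ⊥ = ⊥ := by
  cases a <;> rfl

lemma convexComb_coe_coe (t x z : ℝ) :
    convexComb t x z = (((1 - t) * x + t * z : ℝ) : RMax) := rfl

lemma coe_le_tPhat {P : ℕ → RMax} {n i : ℕ} {a : ℝ} (hi : i ≤ n) (hPi : P i = a) (y : ℝ) :
    ((a + i * y : ℝ) : RMax) ≤ tPhat P n y := by
  have := Finset.le_sup (f := fun k : ℕ => P k + k • (y : RMax))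
    (Finset.mem_range.2 (Nat.lt_succ_of_le hi))
  simpa only [tPhat, hPi, ← WithBot.coe_nsmul, nsmul_eq_mul, ← WithBot.coe_add] using this

lemma tPhat_le_coe {P : ℕ → RMax} {n : ℕ} {y c : ℝ}
    (h : ∀ i ≤ n, ∀ a : ℝ, P i = a → a + i * y ≤ c) : tPhat P n y ≤ c := by
  refine Finset.sup_le fun i hi => ?_
  cases hPi : P i using WithBot.recBotCoe with
  | bot => simp
  | coe a =>
    rw [← WithBot.coe_nsmul, nsmul_eq_mul, ← WithBot.coe_add, WithBot.coe_le_coe]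
    exact h i (Nat.lt_succ_iff.1 (Finset.mem_range.1 hi)) a hPi

theorem Finset.exists_between_of_forall_le {α ι κ : Type*} [Lattice α] [Nonempty α]
    (A : Finset ι) (B : Finset κ) (f : ι → α) (g : κ → α) (h : ∀ a ∈ A, ∀ b ∈ B, f a ≤ g b) :
    ∃ y, (∀ a ∈ A, f a ≤ y) ∧ ∀ b ∈ B, y ≤ g b := by
  by_cases hA : A.Nonempty
  · exact ⟨A.sup' hA f, fun a ha => A.le_sup' f ha,
      fun b hb => A.sup'_le hA f fun a ha => h a ha b hb⟩
  by_cases hB : B.Nonempty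
  · refine ⟨B.inf' hB g, ?_, fun b hb => B.inf'_le g hb⟩
    simp [Finset.not_nonempty_iff_eq_empty.1 hA]
  · exact ⟨Classical.arbitrary α, by simp [Finset.not_nonempty_iff_eq_empty.1 hA],
      by simp [Finset.not_nonempty_iff_eq_empty.1 hB]⟩

theorem exists_forall_add_mul_le {ι : Type*} (S : Finset ι) (x p : ι → ℝ) (s : ℝ)
    (hzero : ∀ i ∈ S, x i = 0 → p i ≤ s)
    (hpair : ∀ i ∈ S, ∀ j ∈ S, x i < 0 → 0 < x j → x j * p i - x i * p j ≤ (x j - x i) * s) :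
    ∃ y, ∀ i ∈ S, p i + x i * y ≤ s := by
  obtain ⟨y, hlower, hupper⟩ := Finset.exists_between_of_forall_le
    (S.filter (x · < 0)) (S.filter (0 < x ·)) (fun i => (s - p i) / x i) (fun j => (s - p j) / x j)
    (by
      simp only [Finset.mem_filter]
      rintro i ⟨hi, hneg⟩ j ⟨hj, hpos⟩
      rw [div_le_iff_of_neg hneg, div_mul_eq_mul_div, div_le_iff₀ hpos]
      linarith [hpair i hi j hj hneg hpos])
  refine ⟨y, fun i hi => ?_⟩
  rcases lt_trichotomy (x i) 0 with hneg | hx | hpos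
  · have hy := hlower i (Finset.mem_filter.2 ⟨hi, hneg⟩)
    rw [div_le_iff_of_neg hneg] at hy
    linarith
  · simpa [hx] using hzero i hi hx
  · have hy := hupper i (Finset.mem_filter.2 ⟨hi, hpos⟩)
    rw [le_div_iff₀ hpos] at hy
    linarith

theorem exists_rat_combo_eq {a b c : ℚ} (hac : a ≤ c) (hcb : c ≤ b) :
    ∃ t : ℚ, 0 ≤ t ∧ t ≤ 1 ∧ (1 - t) * a + t * b = c := by
  obtain ⟨u, t, hu, ht, hut, rfl⟩ := (Convex.mem_Icc (hac.trans hcb)).1 ⟨hac, hcb⟩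
  exact ⟨t, ht, by linarith, by rw [← hut]; ring⟩

section

variable {P : ℕ → RMax} {n k : ℕ}

theorem convexComb_le_tPhat_add (hdeg : ∀ k, n < k → P k = ⊥) {i j : ℕ} {t : ℝ}
    (ht0 : 0 ≤ t) (ht1 : t ≤ 1) (hk : (1 - t) * i + t * j = k) (y : ℝ) :
    convexComb t (P i) (P j) ≤ tPhat P n y + ((-(k * y) : ℝ) : RMax) := by
  cases hPi : P i using WithBot.recBotCoe with
  | bot => exact bot_le
  | coe a =>
  cases hPj : P j using WithBot.recBotCoe with
  | bot => rw [convexComb_bot_right]; exact bot_le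
  | coe b =>
  have hin : i ≤ n := not_lt.1 fun h => by simp [hdeg i h] at hPi
  have hjn : j ≤ n := not_lt.1 fun h => by simp [hdeg j h] at hPj
  calc convexComb t a b
      = (((1 - t) • (a + i * y) + t • (b + j * y) : ℝ) : RMax) + ((-(k * y) : ℝ) : RMax) := by
        rw [convexComb_coe_coe, ← WithBot.coe_add, ← hk, smul_eq_mul, smul_eq_mul]
        congr 1
        ring
    _ ≤ ((max (a + i * y) (b + j * y) : ℝ) : RMax) + ((-(k * y) : ℝ) : RMax) := by
        gcongr
        exact WithBot.coe_le_coe.2 <|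
          Convex.combo_le_max (a + i * y) (b + j * y) (by linarith) ht0 (sub_add_cancel 1 t)
    _ ≤ tPhat P n y + ((-(k * y) : ℝ) : RMax) := by
        gcongr
        rw [WithBot.coe_max]
        exact max_le (coe_le_tPhat hin hPi y) (coe_le_tPhat hjn hPj y)

theorem exists_tPhat_add_le_of_convexComb_le {s : ℝ}
    (hs : ∀ (i j : ℕ) (t : ℚ), 0 ≤ t → t ≤ 1 → (1 - (t : ℝ)) * i + t * j = k →
      convexComb t (P i) (P j) ≤ s) :
    ∃ y : ℝ, tPhat P n y + ((-(k * y) : ℝ) : RMax) ≤ s := by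
  set S := (Finset.range (n + 1)).filter (P · ≠ ⊥)
  set p : ℕ → ℝ := fun i => (P i).unbotD 0
  have hPS : ∀ i ∈ S, P i = p i := fun i hi =>
    (WithBot.unbotD_eq_iff.1 rfl).resolve_right fun h => (Finset.mem_filter.1 hi).2 h.1
  suffices ∃ y : ℝ, ∀ i ∈ S, p i + ((i : ℝ) - k) * y ≤ s by
    obtain ⟨y, hy⟩ := this
    have hPhat : tPhat P n y ≤ ((s + k * y : ℝ) : RMax) := tPhat_le_coe fun i hin a ha => by
      have hi : i ∈ S :=
        Finset.mem_filter.2 ⟨Finset.mem_range.2 (Nat.lt_succ_of_le hin), by simp [ha]⟩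
      have hpa : p i = a := WithBot.coe_injective ((hPS i hi).symm.trans ha)
      linarith [hy i hi]
    refine ⟨y, ?_⟩
    calc tPhat P n y + ((-(k * y) : ℝ) : RMax)
        ≤ ((s + k * y : ℝ) : RMax) + ((-(k * y) : ℝ) : RMax) := by gcongr
      _ = s := by rw [← WithBot.coe_add, add_neg_cancel_right]
  refine exists_forall_add_mul_le S _ p s (fun i hi hik => ?_) (fun i hi j hj hik hkj => ?_)
  · have hcomb := hs i i 0 le_rfl zero_le_one (by push_cast; linarith)
    rwa [hPS i hi, convexComb_coe_coe, WithBot.coe_le_coe, Rat.cast_zero, sub_zero, one_mul,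
      zero_mul, add_zero] at hcomb
  · obtain ⟨t, ht0, ht1, hk⟩ := exists_rat_combo_eq (a := i) (b := j) (c := k)
      (by exact_mod_cast (sub_neg.1 hik).le) (by exact_mod_cast (sub_pos.1 hkj).le)
    have hk : (1 - (t : ℝ)) * i + t * j = k := by exact_mod_cast hk
    have hcomb := hs i j t ht0 ht1 hk
    rw [hPS i hi, hPS j hj, convexComb_coe_coe, WithBot.coe_le_coe] at hcomb
    rw [← hk]
    linarith [mul_le_mul_of_nonneg_left hcomb (by linarith : (0 : ℝ) ≤ j - i)]

end

theorem rmax_canonical_form_eq_concave_hull_general (P : ℕ → RMax) (n : ℕ)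
    (hdeg : ∀ k, n < k → P k = ⊥)
    (Pc Psharp : ℕ → RMax)
    (hPc : ∀ k : ℕ,
      IsGLB (Set.range fun y : ℝ => tPhat P n (y : RMax) + ((-(k * y) : ℝ) : RMax)) (Pc k))
    (hPs : ∀ k : ℕ,
      IsLUB {z : RMax | ∃ (i j : ℕ) (t : ℚ), 0 ≤ t ∧ t ≤ 1 ∧
        (1 - (t : ℝ)) * (i : ℝ) + (t : ℝ) * (j : ℝ) = (k : ℝ) ∧
        z = convexComb (t : ℝ) (P i) (P j)} (Psharp k)) :
    Pc = Psharp := by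
  funext k
  apply le_antisymm
  · refine WithBot.forall_le_coe_iff_le.1 fun s hs => ?_
    obtain ⟨y, hy⟩ := exists_tPhat_add_le_of_convexComb_le (n := n) fun i j t ht0 ht1 hk =>
      ((hPs k).1 ⟨i, j, t, ht0, ht1, hk, rfl⟩).trans hs
    exact ((hPc k).1 ⟨y, rfl⟩).trans hy
  · refine (hPc k).2 ?_
    rintro _ ⟨y, rfl⟩
    refine (hPs k).2 ?_
    rintro _ ⟨i, j, t, ht0, ht1, hk, rfl⟩
    exact convexComb_le_tPhat_add hdeg (by exact_mod_cast ht0) (by exact_mod_cast ht1) hk y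

/-- For a nonzero formal polynomial `P` over `R_max`, the canonical form `P^c`
(the coefficientwise greatest lower bound `P^c_k = inf_y (P̂(y) - k·y)`)
coincides with the concave hull `P^♯`, where
`P^♯_k = max {(1-t)·P_i + t·P_j : i, j ∈ ℕ, t ∈ ℚ ∩ [0,1], (1-t)·i + t·j = k}`. -/
theorem rmax_canonical_form_eq_concave_hull (P : ℕ → RMax) (n : ℕ)
    (hPn : P n ≠ ⊥) (hdeg : ∀ k, n < k → P k = ⊥)
    (Pc Psharp : ℕ → RMax)
    (hPc : ∀ k : ℕ,
      IsGLB (Set.range fun y : ℝ => tPhat P n (y : RMax) + ((-(k * y) : ℝ) : RMax)) (Pc k))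
    (hPs : ∀ k : ℕ,
      IsLUB {z : RMax | ∃ (i j : ℕ) (t : ℚ), 0 ≤ t ∧ t ≤ 1 ∧
        (1 - (t : ℝ)) * (i : ℝ) + (t : ℝ) * (j : ℝ) = (k : ℝ) ∧
        z = convexComb (t : ℝ) (P i) (P j)} (Psharp k)) :
    Pc = Psharp :=
  rmax_canonical_form_eq_concave_hull_general P n hdeg Pc Psharp hPc hPs
end
end

section
/- Let Γ be a divisible ordered abelian group and P ∈ S_max^∨[Y] of degree n with the formal polynomial |P| factored (i.e., its coefficient map is concave with full support between lower degree m and degree n). Then P̂ factors as P̂(y) = P_n ⊙ (y ⊖ r_1) ⊙ ... ⊙ (y ⊖ r_n), where r_i ∈ S_max^∨ is the unique signed element with r_i ⊙ P_{n-i+1} = ⊖ P_{n-i} for i ≤ n−m, and r_i = 0 for i > n−m; moreover |r_1| ≥ ... ≥ |r_n| are the corners of |P| counted with multiplicities. -/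
set_option linter.unusedVariables false

/-- The symmetrized tropical semiring `S_max(Γ)` over an ordered abelian group `Γ`:
its elements are the zero, the positive elements, the negative elements and the
(nonzero) balanced elements, each carrying a modulus in `Γ`. -/
inductive SMax (Γ : Type) : Type
  | zero : SMax Γ
  | pos : Γ → SMax Γ
  | neg : Γ → SMax Γ
  | bal : Γ → SMax Γ
  deriving DecidableEq

namespace SMax

variable {Γ : Type} [AddCommGroup Γ] [LinearOrder Γ] [IsOrderedAddMonoid Γ]

/-- The modulus (absolute value) map, with values in the tropical semifield `T_max = Γ ∪ {⊥}`. -/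
def mod : SMax Γ → WithBot Γ
  | .zero => ⊥
  | .pos a => (a : WithBot Γ)
  | .neg a => (a : WithBot Γ)
  | .bal a => (a : WithBot Γ)

/-- The negation map `⊖`. -/
def sneg : SMax Γ → SMax Γ
  | .zero => .zero
  | .pos a => .neg a
  | .neg a => .pos a
  | .bal a => .bal a

/-- Addition `⊕` of `S_max`. -/
def add : SMax Γ → SMax Γ → SMax Γ
  | .zero, y => y
  | x, .zero => x
  | .pos a, .pos b => .pos (max a b)
  | .neg a, .neg b => .neg (max a b)
  | .pos a, .neg b => if b < a then .pos a else if a < b then .neg b else .bal a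
  | .neg a, .pos b => if b < a then .neg a else if a < b then .pos b else .bal a
  | .bal a, .pos b => if a < b then .pos b else .bal a
  | .bal a, .neg b => if a < b then .neg b else .bal a
  | .pos a, .bal b => if b < a then .pos a else .bal b
  | .neg a, .bal b => if b < a then .neg a else .bal b
  | .bal a, .bal b => .bal (max a b)

/-- Multiplication `⊙` of `S_max`. -/
def mul : SMax Γ → SMax Γ → SMax Γ
  | .zero, _ => .zero
  | _, .zero => .zero
  | .pos a, .pos b => .pos (a + b)
  | .pos a, .neg b => .neg (a + b)
  | .pos a, .bal b => .bal (a + b)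
  | .neg a, .pos b => .neg (a + b)
  | .neg a, .neg b => .pos (a + b)
  | .neg a, .bal b => .bal (a + b)
  | .bal a, .pos b => .bal (a + b)
  | .bal a, .neg b => .bal (a + b)
  | .bal a, .bal b => .bal (a + b)

/-- The multiplicative unit `𝟙 = (0, ⊥)`. -/
def one : SMax Γ := .pos 0

/-- Signed elements (`S_max^∨`): positive, negative, or zero. -/
def isSigned : SMax Γ → Prop
  | .bal _ => False
  | _ => True

/-- Balanced elements (`S_max^∘`), including zero. -/
def isBalanced : SMax Γ → Prop
  | .zero => True
  | .bal _ => True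
  | _ => False

/-- The balance relation `x ∇ y`, i.e. `x ⊖ y` is balanced. -/
def nabla (x y : SMax Γ) : Prop := isBalanced (add x (sneg y))

/-- Powers in `S_max`. -/
def spow (x : SMax Γ) : ℕ → SMax Γ
  | 0 => one
  | k + 1 => mul x (spow x k)

/-- Sum of a list of elements of `S_max`. -/
def lsum : List (SMax Γ) → SMax Γ := List.foldr add .zero

/-- The polynomial function `P̂(y) = ⊕_{k ≤ n} P_k ⊙ y^{⊙ k}` of a formal
polynomial of degree at most `n`. -/
def phat (P : ℕ → SMax Γ) (n : ℕ) (y : SMax Γ) : SMax Γ :=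
  lsum ((List.range (n + 1)).map fun k => mul (P k) (spow y k))

/-- The product `(y ⊖ r₁) ⊙ ⋯ ⊙ (y ⊖ r_n)` over a list of roots. -/
def evalFactors (y : SMax Γ) : List (SMax Γ) → SMax Γ
  | [] => one
  | r :: rs => mul (add y (sneg r)) (evalFactors y rs)

/-- The formal linear polynomial `Y ⊖ r`. -/
def linFactor (r : SMax Γ) : ℕ → SMax Γ :=
  fun k => if k = 0 then sneg r else if k = 1 then one else .zero

/-- Constant formal polynomial. -/
def constPoly (c : SMax Γ) : ℕ → SMax Γ := fun k => if k = 0 then c else .zero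

/-- Cauchy product of formal polynomials over `S_max`. -/
def polyMul (P Q : ℕ → SMax Γ) : ℕ → SMax Γ :=
  fun k => lsum ((List.range (k + 1)).map fun i => mul (P i) (Q (k - i)))

/-- The formal polynomial `c ⊙ (Y ⊖ r₁) ⋯ (Y ⊖ r_n)`. -/
def prodLin (c : SMax Γ) : List (SMax Γ) → ℕ → SMax Γ
  | [] => constPoly c
  | r :: rs => polyMul (linFactor r) (prodLin c rs)

/-- Polynomial function of a tropical polynomial over `T_max = WithBot Γ`. -/
def tphat (Q : ℕ → WithBot Γ) (n : ℕ) (x : WithBot Γ) : WithBot Γ :=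
  (Finset.range (n + 1)).sup fun k => Q k + k • x

/-- `a` is a root of the (finitely supported) formal polynomial `P`, i.e. `P̂(a) ∇ 0`. -/
def IsRoot (P : ℕ → SMax Γ) (a : SMax Γ) : Prop :=
  ∃ N, (∀ k, N < k → P k = .zero) ∧ nabla (phat P N a) .zero

/-- The coefficientwise balance relation `λ P ∇ (Y ⊖ a) Q`. -/
def balFactor (a lam : SMax Γ) (P Q : ℕ → SMax Γ) : Prop :=
  (∀ k, 1 ≤ k → nabla (mul lam (P k)) (add (Q (k - 1)) (mul (sneg a) (Q k)))) ∧
  nabla (mul lam (P 0)) (mul (sneg a) (Q 0))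

/-- The Baker–Lorscheid multiplicity of `a` as a root of `P` is at least `m`:
there is a chain of length `m` of divisions by `(Y ⊖ a)` up to balance, with
tangible multipliers and signed quotients. -/
def MultGe (a : SMax Γ) : ℕ → (ℕ → SMax Γ) → Prop
  | 0, _ => True
  | m + 1, P => IsRoot P a ∧ ∃ (lam : SMax Γ) (Q : ℕ → SMax Γ),
      isSigned lam ∧ lam ≠ .zero ∧ (∀ k, isSigned (Q k)) ∧
      (∃ N, ∀ k, N < k → Q k = .zero) ∧ balFactor a lam P Q ∧ MultGe a m Q

/-- The Baker–Lorscheid multiplicity of `a` as a root of `P` equals `m`. -/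
def MultEq (a : SMax Γ) (P : ℕ → SMax Γ) (m : ℕ) : Prop :=
  MultGe a m P ∧ ¬ MultGe a (m + 1) P

/-- The number of sign changes in the (nonzero) coefficients of a formal polynomial. -/
noncomputable def signChanges (Q : ℕ → SMax Γ) : ℕ :=
  Set.ncard {i : ℕ | ∃ k, 1 ≤ k ∧ Q i ≠ .zero ∧ Q i = sneg (Q (i + k)) ∧
    ∀ j, i < j → j < i + k → Q j = .zero}

end SMax


/-!
Write `P̂(y) = P₀ ⊕ y ⊙ Q̂(y)` with `Q_k = P_{k+1}` and induct on the degree. If `P₀ = 0`, the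
last root is `0`. Otherwise `c = ⊖ r_n` satisfies `c ⊙ P₁ = P₀`, and concavity of `|P|` makes
`|c| = |P₀| - |P₁|` its smallest slope, so `|P_{k+1}| + k |c| ≤ |P₁|`. Comparing `|y|` with `|c|`
gives `P₀ ⊕ y ⊙ Q̂(y) = Q̂(y) ⊙ (y ⊕ c)`: for `|y| < |c|` the term `P₁` dominates `Q̂(y)`, for
`|y| > |c|` we have `y ⊕ c = y`, and for `|y| = |c|` either `y ⊕ c = y` or `y ⊕ c` is balanced
and absorbs all remaining terms. Taking moduli, which turns `⊕, ⊙` into `max, +`, gives the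
tropical factorization of `|P|`, and the order of the `|r_i|` is the concavity of `|P|`.
-/

theorem WithBot.nsmul_ne_bot {α : Type*} [AddMonoid α] {t : WithBot α} (ht : t ≠ ⊥) (k : ℕ) :
    k • t ≠ ⊥ := by
  lift t to α using ht
  rw [← WithBot.coe_nsmul]
  exact WithBot.coe_ne_bot

theorem WithBot.add_succ_nsmul_lt {α : Type*} [AddCommGroup α] [LinearOrder α]
    [IsOrderedAddMonoid α] {u v w b : WithBot α} (hvw : v < w) (hb : b ≠ ⊥) {k : ℕ}
    (h : u + (k + 1) • w ≤ b) : u + (k + 1) • v < b := by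
  by_cases hu : u = ⊥
  · rw [hu, WithBot.bot_add]
    exact bot_lt_iff_ne_bot.mpr hb
  have hne : u + k • w ≠ ⊥ := WithBot.add_ne_bot.mpr ⟨hu, WithBot.nsmul_ne_bot (ne_bot_of_gt hvw) k⟩
  calc u + (k + 1) • v = u + k • v + v := by rw [succ_nsmul, add_assoc]
    _ ≤ u + k • w + v := by gcongr
    _ < u + k • w + w := WithBot.add_lt_add_left hne hvw
    _ = u + (k + 1) • w := by rw [succ_nsmul, add_assoc]
    _ ≤ b := h

section Concave

variable {α : Type*} [AddCommGroup α] [PartialOrder α] [IsOrderedAddMonoid α] {a : ℕ → α} {n : ℕ}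

theorem add_sub_le_of_concave (hconc : ∀ k, 0 < k → k < n → a (k + 1) + a (k - 1) ≤ a k + a k) :
    ∀ k < n, a (k + 1) + (a 0 - a 1) ≤ a k
  | 0, _ => by rw [add_sub_cancel]
  | k + 1, hk => by
    have hslope := add_sub_le_of_concave hconc k (by omega)
    have h := hconc (k + 1) k.succ_pos hk
    rw [Nat.add_sub_cancel] at h
    refine le_of_add_le_add_right (a := a (k + 1)) ?_
    calc a (k + 1 + 1) + (a 0 - a 1) + a (k + 1) = a (k + 2) + (a (k + 1) + (a 0 - a 1)) := by
          abel
      _ ≤ a (k + 2) + a k := by gcongr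
      _ ≤ a (k + 1) + a (k + 1) := h

theorem add_nsmul_le_of_concave (hconc : ∀ k, 0 < k → k < n → a (k + 1) + a (k - 1) ≤ a k + a k) :
    ∀ k < n, a (k + 1) + k • (a 0 - a 1) ≤ a 1
  | 0, _ => by rw [zero_nsmul, add_zero]
  | k + 1, hk =>
    calc a (k + 1 + 1) + (k + 1) • (a 0 - a 1) = a (k + 2) + (a 0 - a 1) + k • (a 0 - a 1) := by
          rw [succ_nsmul]; abel
      _ ≤ a (k + 1) + k • (a 0 - a 1) := by gcongr; exact add_sub_le_of_concave hconc (k + 1) hk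
      _ ≤ a 1 := add_nsmul_le_of_concave hconc k (by omega)

end Concave

namespace SMax

section Basic

variable {Γ : Type}

instance : Zero (SMax Γ) := ⟨zero⟩

@[simp] theorem zero_def : (zero : SMax Γ) = 0 := rfl

theorem mod_eq_bot {x : SMax Γ} : mod x = ⊥ ↔ x = 0 := by
  cases x <;> simp [mod]

theorem mod_ne_bot {x : SMax Γ} (hx : x ≠ 0) : mod x ≠ ⊥ := mod_eq_bot.not.mpr hx

theorem mod_sneg (x : SMax Γ) : mod (sneg x) = mod x := by
  cases x <;> rfl

theorem sneg_zero : sneg (0 : SMax Γ) = 0 := rfl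

theorem sneg_sneg (x : SMax Γ) : sneg (sneg x) = x := by
  cases x <;> rfl

theorem exists_mod_eq (t : WithBot Γ) : ∃ y : SMax Γ, mod y = t := by
  cases t with
  | bot => exact ⟨0, rfl⟩
  | coe t => exact ⟨pos t, rfl⟩

end Basic

section Add

variable {Γ : Type} [LinearOrder Γ]

instance : Add (SMax Γ) := ⟨add⟩

theorem add_def (x y : SMax Γ) : x + y = add x y := rfl

protected theorem add_comm (x y : SMax Γ) : x + y = y + x := by
  cases x <;> cases y <;> simp only [add_def, add] <;> (try split_ifs) <;> grind

protected theorem add_assoc (x y z : SMax Γ) : x + y + z = x + (y + z) := by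
  cases x <;> cases y <;> cases z <;> simp only [add_def, add] <;> (try split_ifs) <;> grind

theorem mod_add (x y : SMax Γ) : mod (x + y) = max (mod x) (mod y) := by
  cases x <;> cases y <;> simp only [add_def, add, mod] <;> (try split_ifs) <;> simp <;> grind

theorem add_eq_left_of_mod_lt {x y : SMax Γ} (h : mod y < mod x) : x + y = x := by
  cases x <;> cases y <;> simp_all [add_def, add, mod] <;> grind

theorem add_eq_left_of_isBalanced {x y : SMax Γ} (hx : isBalanced x) (h : mod y ≤ mod x) :
    x + y = x := by
  cases x <;> cases y <;> simp_all [add_def, add, mod, isBalanced]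

theorem add_eq_left_or_isBalanced {x y : SMax Γ} (h : mod y ≤ mod x) :
    x + y = x ∨ isBalanced (x + y) ∧ mod y = mod x := by
  cases x <;> cases y <;> simp_all [add_def, add, mod, isBalanced] <;> grind

end Add

section Mul

variable {Γ : Type} [AddCommGroup Γ]

instance : One (SMax Γ) := ⟨one⟩

instance : Mul (SMax Γ) := ⟨mul⟩

theorem mul_def (x y : SMax Γ) : x * y = mul x y := rfl

protected theorem mul_comm (x y : SMax Γ) : x * y = y * x := by
  cases x <;> cases y <;> simp only [mul_def, mul, add_comm]

instance : CommMonoid (SMax Γ) where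
  mul_assoc x y z := by cases x <;> cases y <;> cases z <;> simp only [mul_def, mul, add_assoc]
  one_mul x := by cases x <;> first | rfl | exact congrArg _ (zero_add _)
  mul_one x := by cases x <;> first | rfl | exact congrArg _ (add_zero _)
  mul_comm := SMax.mul_comm
  -- `spow` as `npow` makes `phat` definitionally a semiring sum (`phat_eq_sum` is `rfl`)
  npow n x := spow x n
  npow_zero x := rfl
  npow_succ n x := SMax.mul_comm x (spow x n)

theorem mod_mul (x y : SMax Γ) : mod (x * y) = mod x + mod y := by
  cases x <;> cases y <;> rfl

theorem mod_pow (x : SMax Γ) (k : ℕ) : mod (x ^ k) = k • mod x := by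
  induction k with
  | zero => rw [pow_zero, zero_nsmul]; rfl
  | succ k ih => rw [pow_succ, mod_mul, ih, succ_nsmul]

theorem mod_list_prod (L : List (SMax Γ)) : mod L.prod = (L.map mod).sum := by
  induction L with
  | nil => rfl
  | cons x L ih => rw [List.prod_cons, mod_mul, ih, List.map_cons, List.sum_cons]

theorem mod_eq_coe_sub {x y z : SMax Γ} {b c : Γ} (h : x * y = z) (hy : mod y = b)
    (hz : mod z = c) : mod x = ↑(c - b) := by
  have h' := congrArg mod h
  rw [mod_mul, hy, hz] at h'
  obtain ⟨a', b', ha, hb, hab⟩ := WithBot.add_eq_coe.mp h'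
  rw [← ha, ← WithBot.coe_inj.mp hb, ← hab, add_sub_cancel_right]

theorem isBalanced_mul {x y : SMax Γ} (hy : isBalanced y) : isBalanced (x * y) := by
  cases x <;> cases y <;> simp_all [mul_def, mul, isBalanced]

theorem mul_sneg (x y : SMax Γ) : x * sneg y = sneg (x * y) := by
  cases x <;> cases y <;> rfl

end Mul

section Semiring

variable {Γ : Type} [AddCommGroup Γ] [LinearOrder Γ]

theorem evalFactors_eq_prod (y : SMax Γ) (L : List (SMax Γ)) :
    evalFactors y L = (L.map fun r => y + sneg r).prod := by
  induction L with
  | nil => rfl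
  | cons r L ih => rw [List.map_cons, List.prod_cons, ← ih]; rfl

variable [IsOrderedAddMonoid Γ]

protected theorem mul_add (x y z : SMax Γ) : x * (y + z) = x * y + x * z := by
  cases x <;> cases y <;> cases z <;>
    simp only [add_def, mul_def, add, mul, add_lt_add_iff_left, ← add_max] <;> (try split_ifs) <;>
    grind

instance : CommSemiring (SMax Γ) where
  add_assoc := SMax.add_assoc
  zero_add x := by cases x <;> rfl
  add_zero x := by cases x <;> rfl
  add_comm := SMax.add_comm
  nsmul := nsmulRec
  zero_mul x := rfl
  mul_zero x := by cases x <;> rfl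
  left_distrib := SMax.mul_add
  right_distrib x y z := by simp only [mul_comm _ z]; exact SMax.mul_add z x y

open Finset

theorem mod_sum {ι : Type*} (s : Finset ι) (f : ι → SMax Γ) :
    mod (∑ i ∈ s, f i) = s.sup fun i => mod (f i) := by
  classical
  induction s using Finset.induction_on with
  | empty => rfl
  | insert i s hi ih => rw [sum_insert hi, sup_insert, mod_add, ih]

theorem phat_eq_sum (P : ℕ → SMax Γ) (n : ℕ) (y : SMax Γ) :
    phat P n y = ∑ k ∈ range (n + 1), P k * y ^ k := rfl

theorem phat_succ (P : ℕ → SMax Γ) (n : ℕ) (y : SMax Γ) :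
    phat P (n + 1) y = P 0 + y * phat (fun k => P (k + 1)) n y := by
  simp only [phat_eq_sum, sum_range_succ' _ (n + 1), mul_sum, pow_succ, pow_zero, mul_one]
  rw [add_comm]
  congr 1
  exact sum_congr rfl fun k _ => by ring

theorem mod_phat (P : ℕ → SMax Γ) (n : ℕ) (y : SMax Γ) :
    mod (phat P n y) = tphat (fun k => mod (P k)) n (mod y) := by
  simp only [phat_eq_sum, mod_sum, mod_mul, mod_pow, tphat]

end Semiring

section Factorization

variable {Γ : Type} [AddCommGroup Γ] [LinearOrder Γ] [IsOrderedAddMonoid Γ]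

open Finset

theorem phat_succ_eq_mul_add {P : ℕ → SMax Γ} {N : ℕ} {c : SMax Γ} (hP1 : P 1 ≠ 0)
    (hc : c * P 1 = P 0) (hdom : ∀ k ≤ N, mod (P (k + 1)) + k • mod c ≤ mod (P 1))
    (y : SMax Γ) : phat P (N + 1) y = phat (fun k => P (k + 1)) N y * (y + c) := by
  set R := ∑ k ∈ range N, P (k + 2) * y ^ (k + 1)
  have hT : phat (fun k => P (k + 1)) N y = P 1 + R := by
    rw [phat_eq_sum, sum_range_succ', add_comm, pow_zero, mul_one]
  have hmodR : mod R = (range N).sup fun k => mod (P (k + 2)) + (k + 1) • mod y := by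
    simp only [R, mod_sum, mod_mul, mod_pow]
  rw [phat_succ, hT, ← hc]
  rcases lt_or_ge (mod y) (mod c) with hyc | hcy
  · have hRlt : mod R < mod (P 1) := by
      rw [hmodR, Finset.sup_lt_iff (bot_lt_iff_ne_bot.mpr (mod_ne_bot hP1))]
      exact fun k hk => WithBot.add_succ_nsmul_lt hyc (mod_ne_bot hP1)
        (hdom (k + 1) (by simp at hk; omega))
    rw [add_eq_left_of_mod_lt hRlt]
    ring
  · suffices P 1 * (y + c) + y * R = P 1 * (y + c) + R * (y + c) by
      calc c * P 1 + y * (P 1 + R) = P 1 * (y + c) + y * R := by ring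
        _ = P 1 * (y + c) + R * (y + c) := this
        _ = (P 1 + R) * (y + c) := by ring
    rcases add_eq_left_or_isBalanced hcy with hb | ⟨hbal, hmod⟩
    · rw [hb, mul_comm R]
    have hRle : mod R ≤ mod (P 1) := by
      rw [hmodR, Finset.sup_le_iff]
      intro k hk
      rw [← hmod]
      exact hdom (k + 1) (by simp at hk; omega)
    have hmodb : mod (y + c) = mod y := by rw [mod_add, max_eq_left hcy]
    rw [add_eq_left_of_isBalanced (isBalanced_mul hbal),
      add_eq_left_of_isBalanced (isBalanced_mul hbal)]
    · rw [mod_mul, mod_mul]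
      gcongr
    · rw [mod_mul, mod_mul, hmodb, add_comm]
      gcongr

theorem mod_add_nsmul_le_of_concave {P : ℕ → SMax Γ} {n : ℕ} (hP : ∀ k ≤ n, P k ≠ 0)
    (hconc : ∀ k, 0 < k → k < n → mod (P (k + 1)) + mod (P (k - 1)) ≤ mod (P k) + mod (P k))
    {c : SMax Γ} (hc : c * P 1 = P 0) : ∀ k < n, mod (P (k + 1)) + k • mod c ≤ mod (P 1) := by
  choose! a ha using fun k (hk : k ≤ n) => WithBot.ne_bot_iff_exists.mp (mod_ne_bot (hP k hk))
  intro k hk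
  have hconc' : ∀ k, 0 < k → k < n → a (k + 1) + a (k - 1) ≤ a k + a k := fun k hk0 hkn => by
    have h := hconc k hk0 hkn
    rwa [← ha (k + 1) hkn, ← ha (k - 1) (by omega), ← ha k hkn.le, ← WithBot.coe_add,
      ← WithBot.coe_add, WithBot.coe_le_coe] at h
  rw [mod_eq_coe_sub hc (ha 1 (by omega)).symm (ha 0 (Nat.zero_le n)).symm, ← ha (k + 1) hk,
    ← ha 1 (by omega), ← WithBot.coe_nsmul, ← WithBot.coe_add, WithBot.coe_le_coe]
  exact add_nsmul_le_of_concave hconc' k hk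

variable {P r : ℕ → SMax Γ} {m n : ℕ}

theorem phat_eq_mul_prod (hsupp : ∀ k, P k ≠ 0 ↔ m ≤ k ∧ k ≤ n)
    (hconc : ∀ k, m < k → k < n → mod (P (k + 1)) + mod (P (k - 1)) ≤ mod (P k) + mod (P k))
    (hr : ∀ i, 1 ≤ i → i ≤ n - m → r i * P (n - i + 1) = sneg (P (n - i)))
    (hr0 : ∀ i, n - m < i → i ≤ n → r i = 0) (y : SMax Γ) :
    phat P n y = P n * ((List.range n).map fun i => y + sneg (r (i + 1))).prod := by
  induction n generalizing m P with
  | zero => simp [phat_eq_sum]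
  | succ n ih =>
    have hQ : phat (fun k => P (k + 1)) n y
        = P (n + 1) * ((List.range n).map fun i => y + sneg (r (i + 1))).prod := by
      refine ih (m := m - 1) (fun k => ?_) (fun k hk hkn => ?_) (fun i hi hin => ?_)
        (fun i hi hin => hr0 i (by omega) (by omega))
      · rw [hsupp]; omega
      · convert hconc (k + 1) (by omega) (by omega) using 4
        omega
      · have h := hr i hi (by omega)
        rwa [show n + 1 - i = n - i + 1 by omega] at h
    rw [List.range_succ, List.map_append, List.prod_append, List.map_singleton,
      List.prod_singleton, ← mul_assoc, ← hQ]
    rcases Nat.eq_zero_or_pos m with rfl | hm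
    · have hP : ∀ k ≤ n + 1, P k ≠ 0 := fun k hk => (hsupp k).mpr ⟨k.zero_le, hk⟩
      have hc : sneg (r (n + 1)) * P 1 = P 0 := by
        have h := hr (n + 1) le_add_self le_rfl
        rw [Nat.sub_self, zero_add] at h
        rw [mul_comm, mul_sneg, mul_comm, h, sneg_sneg]
      exact phat_succ_eq_mul_add (hP 1 (by omega)) hc
        (fun k hk => mod_add_nsmul_le_of_concave hP hconc hc k (by omega)) y
    · have hP0 : P 0 = 0 := by
        by_contra h
        have := (hsupp 0).mp h
        omega
      rw [phat_succ, hP0, hr0 (n + 1) (by omega) le_rfl, sneg_zero, add_zero, zero_add, mul_comm]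

theorem mod_succ_le_mod (hsupp : ∀ k, P k ≠ 0 ↔ m ≤ k ∧ k ≤ n)
    (hconc : ∀ k, m < k → k < n → mod (P (k + 1)) + mod (P (k - 1)) ≤ mod (P k) + mod (P k))
    (hr : ∀ i, 1 ≤ i → i ≤ n - m → r i * P (n - i + 1) = sneg (P (n - i)))
    (hr0 : ∀ i, n - m < i → i ≤ n → r i = 0) {i : ℕ} (hi : 1 ≤ i) (hin : i < n) :
    mod (r (i + 1)) ≤ mod (r i) := by
  by_cases h : i + 1 ≤ n - m
  · choose! a ha using fun k (hk : m ≤ k ∧ k ≤ n) =>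
      WithBot.ne_bot_iff_exists.mp (mod_ne_bot ((hsupp k).mpr hk))
    have hri := mod_eq_coe_sub (hr i hi (by omega)) (ha (n - i + 1) (by omega)).symm
      ((mod_sneg _).trans (ha (n - i) (by omega)).symm)
    have hr' := hr (i + 1) (by omega) h
    rw [show n - (i + 1) + 1 = n - i by omega, show n - (i + 1) = n - i - 1 by omega] at hr'
    have hri' := mod_eq_coe_sub hr' (ha (n - i) (by omega)).symm
      ((mod_sneg _).trans (ha (n - i - 1) (by omega)).symm)
    have hc := hconc (n - i) (by omega) (by omega)
    rw [← ha (n - i + 1) (by omega), ← ha (n - i) (by omega), ← ha (n - i - 1) (by omega),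
      ← WithBot.coe_add, ← WithBot.coe_add, WithBot.coe_le_coe] at hc
    rw [hri, hri', WithBot.coe_le_coe, sub_le_sub_iff, add_comm]
    exact hc
  · rw [hr0 (i + 1) (by omega) (by omega)]
    exact bot_le

end Factorization

end SMax

theorem smax_sufficient_condition_for_factorization_general {Γ : Type}
    [AddCommGroup Γ] [LinearOrder Γ] [IsOrderedAddMonoid Γ]
    (P : ℕ → SMax Γ) (m n : ℕ)
    (hsupp : ∀ k, P k ≠ SMax.zero ↔ m ≤ k ∧ k ≤ n)
    (hconc : ∀ k, m < k → k < n →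
      SMax.mod (P (k + 1)) + SMax.mod (P (k - 1))
        ≤ SMax.mod (P k) + SMax.mod (P k))
    (r : ℕ → SMax Γ)
    (hr1 : ∀ i, 1 ≤ i → i ≤ n - m →
      SMax.isSigned (r i) ∧ SMax.mul (r i) (P (n - i + 1)) = SMax.sneg (P (n - i)))
    (hr2 : ∀ i, n - m < i → i ≤ n → r i = SMax.zero) :
    (∀ y : SMax Γ, SMax.phat P n y
        = SMax.mul (P n) (SMax.evalFactors y ((List.range n).map fun i => r (i + 1)))) ∧
    (∀ i, 1 ≤ i → i < n → SMax.mod (r (i + 1)) ≤ SMax.mod (r i)) ∧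
    (∀ x : WithBot Γ, SMax.tphat (fun k => SMax.mod (P k)) n x
        = SMax.mod (P n) + ((List.range n).map fun i => max x (SMax.mod (r (i + 1)))).sum) := by
  open SMax in
  have hr i hi hin : r i * P (n - i + 1) = sneg (P (n - i)) := (hr1 i hi hin).2
  have hfactor y : phat P n y = P n * ((List.range n).map fun i => y + sneg (r (i + 1))).prod :=
    phat_eq_mul_prod hsupp hconc hr hr2 y
  refine ⟨fun y => ?_, fun i hi hin => mod_succ_le_mod hsupp hconc hr hr2 hi hin, fun x => ?_⟩
  · rw [evalFactors_eq_prod, List.map_map]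
    exact hfactor y
  · obtain ⟨y, rfl⟩ := exists_mod_eq x
    rw [← mod_phat, hfactor, mod_mul, mod_list_prod, List.map_map]
    simp only [Function.comp_def, mod_add, mod_sneg]

/-- Sufficient condition for factorization over `S_max(Γ)`, `Γ` divisible.
If `P` has signed coefficients and `|P|` is factored (full support between the
lower degree `m` and the degree `n`, and concave coefficient map), then `P̂`
factors as `P̂(y) = P_n ⊙ (y ⊖ r₁) ⊙ ⋯ ⊙ (y ⊖ r_n)` where the `r_i` are the
unique signed elements with `r_i ⊙ P_{n-i+1} = ⊖ P_{n-i}` for `i ≤ n - m` and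
`r_i = 0` otherwise; moreover `|r₁| ≥ ⋯ ≥ |r_n|` are the corners of `|P|`
counted with multiplicities (i.e. `|P|` factors tropically through them). -/
theorem smax_sufficient_condition_for_factorization {Γ : Type}
    [AddCommGroup Γ] [LinearOrder Γ] [IsOrderedAddMonoid Γ]
    (hdiv : ∀ (g : Γ) (k : ℕ), 0 < k → ∃ h : Γ, k • h = g)
    (P : ℕ → SMax Γ) (m n : ℕ) (hmn : m ≤ n)
    (hsigned : ∀ k, SMax.isSigned (P k))
    (hsupp : ∀ k, P k ≠ SMax.zero ↔ m ≤ k ∧ k ≤ n)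
    (hconc : ∀ k, m < k → k < n →
      SMax.mod (P (k + 1)) + SMax.mod (P (k - 1))
        ≤ SMax.mod (P k) + SMax.mod (P k))
    (r : ℕ → SMax Γ)
    (hr1 : ∀ i, 1 ≤ i → i ≤ n - m →
      SMax.isSigned (r i) ∧ SMax.mul (r i) (P (n - i + 1)) = SMax.sneg (P (n - i)))
    (hr2 : ∀ i, n - m < i → i ≤ n → r i = SMax.zero) :
    (∀ y : SMax Γ, SMax.phat P n y
        = SMax.mul (P n) (SMax.evalFactors y ((List.range n).map fun i => r (i + 1)))) ∧
    (∀ i, 1 ≤ i → i < n → SMax.mod (r (i + 1)) ≤ SMax.mod (r i)) ∧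
    (∀ x : WithBot Γ, SMax.tphat (fun k => SMax.mod (P k)) n x
        = SMax.mod (P n) + ((List.range n).map fun i => max x (SMax.mod (r (i + 1)))).sum) :=
  smax_sufficient_condition_for_factorization_general P m n hsupp hconc r hr1 hr2
end

section
/- Let (S, T, ⊖, ⊴) be a commutative semiring system satisfying tangible balance elimination (weak transitivity of the balance relation through tangible elements). If a ∈ T ∪ {0} and P, Q are formal polynomials with coefficients in T ∪ {0} such that P ∇ (Y ⊖ a)Q coefficientwise, then a is a root of P, i.e. P̂(a) ∇ 0. Moreover deg(Q) = deg(P) − 1 and Q_{n-1} = P_n where n = deg(P). -/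
set_option linter.unusedVariables false

/-- A (commutative) semiring system in the sense of Rowen: a commutative
semiring `S` together with a multiplicatively cancelative submonoid `tangible`
of nonzero elements which additively generates `S`, a negation map `⊖`, and a
surpassing relation `⊴` (a preorder compatible with the operations such that
`0 ⊴ a ⊖ a`, which is discrete on tangible-or-zero elements and satisfies
unique negation). -/
structure SemiringSystem (S : Type) [CommSemiring S] where
  tangible : Set S
  one_mem : (1 : S) ∈ tangible
  zero_notMem : (0 : S) ∉ tangible
  mul_mem : ∀ {a b : S}, a ∈ tangible → b ∈ tangible → a * b ∈ tangible
  cancel : ∀ {b a a' : S}, b ∈ tangible → b * a = b * a' → a = a'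
  gen : ∀ a : S, ∃ l : List S, (∀ x ∈ l, x ∈ tangible) ∧ l.sum = a
  neg : S → S
  neg_neg : ∀ a, neg (neg a) = a
  neg_zero : neg 0 = 0
  neg_add : ∀ a b, neg (a + b) = neg a + neg b
  neg_mul : ∀ a b, neg (a * b) = neg a * b
  surp : S → S → Prop
  surp_refl : ∀ a, surp a a
  surp_trans : ∀ {a b c}, surp a b → surp b c → surp a c
  surp_add : ∀ {a b c d}, surp a b → surp c d → surp (a + c) (b + d)
  surp_mul : ∀ {a b} (c : S), surp a b → surp (a * c) (b * c)
  surp_zero_balance : ∀ a, surp 0 (a + neg a)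
  surp_tangible : ∀ {b b' : S}, b ∈ insert 0 tangible → b' ∈ insert 0 tangible →
    surp b b' → b = b'
  unique_negation : ∀ {b b' : S}, b ∈ insert 0 tangible → b' ∈ insert 0 tangible →
    surp 0 (b + neg b') → b = b'

/-- The balance relation of a semiring system: `a ∇ b` iff `0 ⊴ a ⊖ b`. -/
def SemiringSystem.nabla {S : Type} [CommSemiring S] (Sys : SemiringSystem S)
    (a b : S) : Prop :=
  Sys.surp 0 (a + Sys.neg b)

/-- In a commutative semiring system satisfying tangible balance elimination
(weak transitivity of the balance relation through tangible-or-zero elements),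
if `a` is tangible-or-zero and `P`, `Q` are formal polynomials with
tangible-or-zero coefficients such that `P ∇ (Y ⊖ a) Q` coefficientwise, then
`a` is a root of `P` (i.e. `P̂(a) ∇ 0`); moreover `deg Q = deg P - 1` and
`Q_{n-1} = P_n` where `n = deg P`. -/
theorem system_balance_factor_gives_root {S : Type} [CommSemiring S]
    (Sys : SemiringSystem S)
    (tbe : ∀ a a1 a2 : S, a ∈ insert 0 Sys.tangible →
      Sys.nabla a1 a → Sys.nabla a a2 → Sys.nabla a1 a2)
    (a : S) (ha : a ∈ insert 0 Sys.tangible)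
    (P Q : ℕ → S) (n : ℕ)
    (hPcoef : ∀ k, P k ∈ insert 0 Sys.tangible)
    (hQcoef : ∀ k, Q k ∈ insert 0 Sys.tangible)
    (hPn : P n ∈ Sys.tangible) (hPdeg : ∀ k, n < k → P k = 0)
    (hQfin : ∃ N, ∀ k, N < k → Q k = 0)
    (hbal1 : ∀ k, 1 ≤ k → Sys.nabla (P k) (Q (k - 1) + Sys.neg a * Q k))
    (hbal0 : Sys.nabla (P 0) (Sys.neg a * Q 0)) :
    Sys.nabla (∑ k ∈ Finset.range (n + 1), P k * a ^ k) 0 ∧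
    (∀ k, n - 1 < k → Q k = 0) ∧ Q (n - 1) = P n := by

  classical
  obtain ⟨N, hN⟩ := hQfin
  have negE : ∀ x : S, Sys.neg x = Sys.neg 1 * x := by
    intro x
    have h := Sys.neg_mul 1 x
    rwa [one_mul] at h
  -- Q vanishes from degree n on
  have key : ∀ m k, n ≤ k → N + 1 ≤ k + m → Q k = 0 := by
    intro m
    induction m with
    | zero =>
      intro k hk hm
      exact hN k (by omega)
    | succ m ih =>
      intro k hk hm
      by_cases h : N < k
      · exact hN k h
      · have hQ1 : Q (k + 1) = 0 := ih (k + 1) (by omega) (by omega)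
        have hb := hbal1 (k + 1) (by omega)
        rw [SemiringSystem.nabla] at hb
        rw [hPdeg (k + 1) (by omega), Nat.add_sub_cancel, hQ1, mul_zero, add_zero] at hb
        exact (Sys.unique_negation (Set.mem_insert _ _) (hQcoef k) hb).symm
  have Qzero : ∀ k, n ≤ k → Q k = 0 := fun k hk => key (N + 1) k hk (by omega)
  have tz_mul : ∀ {x y : S}, x ∈ insert 0 Sys.tangible → y ∈ insert 0 Sys.tangible →
      x * y ∈ insert 0 Sys.tangible := by
    intro x y hx hy
    rcases Set.mem_insert_iff.mp hx with rfl | hx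
    · rw [zero_mul]; exact Set.mem_insert _ _
    rcases Set.mem_insert_iff.mp hy with rfl | hy
    · rw [mul_zero]; exact Set.mem_insert _ _
    exact Set.mem_insert_of_mem _ (Sys.mul_mem hx hy)
  have tz_pow : ∀ m : ℕ, a ^ m ∈ insert 0 Sys.tangible := by
    intro m
    induction m with
    | zero => rw [pow_zero]; exact Set.mem_insert_of_mem _ Sys.one_mem
    | succ m ih => rw [pow_succ]; exact tz_mul ih ha
  have hQn : Q n = 0 := Qzero n le_rfl
  -- the main invariant
  have inv : ∀ j, Sys.surp 0 (a ^ (j + 1) * Q j + ∑ k ∈ Finset.range (j + 1), P k * a ^ k) := by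
    intro j
    induction j with
    | zero =>
      have hb := hbal0
      rw [SemiringSystem.nabla] at hb
      have e1 : P 0 + Sys.neg (Sys.neg a * Q 0)
          = a ^ (0 + 1) * Q 0 + ∑ k ∈ Finset.range (0 + 1), P k * a ^ k := by
        rw [Sys.neg_mul, Sys.neg_neg, Finset.sum_range_one]
        ring
      rwa [e1] at hb
    | succ j ih =>
      have hb := hbal1 (j + 1) (by omega)
      rw [SemiringSystem.nabla] at hb
      have hmul := Sys.surp_mul (a ^ (j + 1)) hb
      rw [zero_mul] at hmul
      have e2 : (P (j + 1) + Sys.neg (Q (j + 1 - 1) + Sys.neg a * Q (j + 1))) * a ^ (j + 1)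
          = (a ^ (j + 1) * P (j + 1) + a ^ (j + 2) * Q (j + 1))
            + Sys.neg (a ^ (j + 1) * Q j) := by
        rw [Nat.add_sub_cancel, Sys.neg_add, Sys.neg_mul, Sys.neg_neg,
          negE (Q j), negE (a ^ (j + 1) * Q j)]
        ring
      rw [e2] at hmul
      have hX : Sys.nabla (a ^ (j + 1) * P (j + 1) + a ^ (j + 2) * Q (j + 1))
          (a ^ (j + 1) * Q j) := hmul
      have ih' : Sys.nabla (a ^ (j + 1) * Q j)
          (Sys.neg (∑ k ∈ Finset.range (j + 1), P k * a ^ k)) := by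
        rw [SemiringSystem.nabla, Sys.neg_neg]
        exact ih
      have hres := tbe _ _ _ (tz_mul (tz_pow (j + 1)) (hQcoef j)) hX ih'
      rw [SemiringSystem.nabla, Sys.neg_neg] at hres
      have e3 : a ^ (j + 1) * P (j + 1) + a ^ (j + 2) * Q (j + 1)
            + ∑ k ∈ Finset.range (j + 1), P k * a ^ k
          = a ^ (j + 1 + 1) * Q (j + 1) + ∑ k ∈ Finset.range (j + 1 + 1), P k * a ^ k := by
        conv_rhs => rw [Finset.sum_range_succ]
        ring
      rwa [e3] at hres
  have part1 : Sys.nabla (∑ k ∈ Finset.range (n + 1), P k * a ^ k) 0 := by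
    have hmain := inv n
    rw [hQn, mul_zero, zero_add] at hmain
    rw [SemiringSystem.nabla, Sys.neg_zero, add_zero]
    exact hmain
  by_cases hn : n = 0
  · -- degenerate case: the hypotheses are contradictory
    exfalso
    subst hn
    have hQ0 : Q 0 = 0 := hQn
    have hb := hbal0
    rw [SemiringSystem.nabla, hQ0, mul_zero] at hb
    have hP0 : P 0 = 0 := Sys.unique_negation (hPcoef 0) (Set.mem_insert _ _) hb
    exact Sys.zero_notMem (hP0 ▸ hPn)
  · refine ⟨part1, fun k hk => Qzero k (by omega), ?_⟩
    have hb := hbal1 n (by omega)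
    rw [SemiringSystem.nabla, hQn, mul_zero, add_zero] at hb
    exact (Sys.unique_negation (hPcoef n) (hQcoef (n - 1)) hb).symm
end

section
/- Let (S, T, ⊖, ⊴) be a semiring system satisfying tangible balancing (for any a1 ∇ a2 there exists a ∈ T∪{0} with a1 ∇ a and a ∇ a2). If P is a formal polynomial with coefficients in T∪{0} and a ∈ T∪{0} is a root of P (P̂(a) ∇ 0), then there exist λ ∈ T and a formal polynomial Q with coefficients in T∪{0} such that λ·P ∇ (Y ⊖ a)·Q coefficientwise. -/
set_option linter.unusedVariables false

/-- In a semiring system satisfying tangible balancing (for any `a₁ ∇ a₂` there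
is a tangible-or-zero `a` with `a₁ ∇ a` and `a ∇ a₂`), if `P` is a formal
polynomial with tangible-or-zero coefficients and `a` is a tangible-or-zero
root of `P`, then there exist a tangible `λ` and a formal polynomial `Q` with
tangible-or-zero coefficients such that `λ·P ∇ (Y ⊖ a)·Q` coefficientwise. -/
theorem system_root_gives_balance_factor {S : Type} [CommSemiring S]
    (Sys : SemiringSystem S)
    (tb : ∀ a1 a2 : S, Sys.nabla a1 a2 →
      ∃ a ∈ insert 0 Sys.tangible, Sys.nabla a1 a ∧ Sys.nabla a a2)
    (P : ℕ → S) (n : ℕ)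
    (hPcoef : ∀ k, P k ∈ insert 0 Sys.tangible)
    (hPdeg : ∀ k, n < k → P k = 0)
    (a : S) (ha : a ∈ insert 0 Sys.tangible)
    (hroot : Sys.nabla (∑ k ∈ Finset.range (n + 1), P k * a ^ k) 0) :
    ∃ lam ∈ Sys.tangible, ∃ Q : ℕ → S,
      (∀ k, Q k ∈ insert 0 Sys.tangible) ∧
      (∃ N, ∀ k, N < k → Q k = 0) ∧
      (∀ k, 1 ≤ k → Sys.nabla (lam * P k) (Q (k - 1) + Sys.neg a * Q k)) ∧
      Sys.nabla (lam * P 0) (Sys.neg a * Q 0) := by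
  classical
  have hneg_mul' : ∀ x y : S, Sys.neg (x * y) = x * Sys.neg y := by
    intro x y; rw [mul_comm x y, Sys.neg_mul, mul_comm]
  have hpow : ∀ m : ℕ, a ∈ Sys.tangible → a ^ m ∈ Sys.tangible := by
    intro m hA
    induction m with
    | zero => simpa using Sys.one_mem
    | succ m ih => rw [pow_succ]; exact Sys.mul_mem ih hA
  rcases Set.mem_insert_iff.mp ha with rfl | haT
  · -- case a = 0
    refine ⟨1, Sys.one_mem, fun k => P (k + 1), fun k => hPcoef (k + 1),
      ⟨n, fun k hk => hPdeg (k + 1) (by omega)⟩, ?_, ?_⟩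
    · intro k hk
      show Sys.surp 0 (1 * P k + Sys.neg (P (k - 1 + 1) + Sys.neg 0 * P (k + 1)))
      rw [Sys.neg_zero, zero_mul, add_zero, one_mul, Nat.sub_add_cancel hk]
      exact Sys.surp_zero_balance (P k)
    · show Sys.surp 0 (1 * P 0 + Sys.neg (Sys.neg 0 * P (0 + 1)))
      rw [Sys.neg_zero, zero_mul, Sys.neg_zero, add_zero, one_mul]
      have h := hroot
      unfold SemiringSystem.nabla at h
      rw [Sys.neg_zero, add_zero, Finset.sum_range_succ'] at h
      simpa using h
  · -- case a tangible
    have hroot' : Sys.surp 0 (∑ k ∈ Finset.range (n + 1), P k * a ^ k) := by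
      have h := hroot
      unfold SemiringSystem.nabla at h
      rwa [Sys.neg_zero, add_zero] at h
    have key : ∀ m, m ≤ n → ∃ c : ℕ → S,
        (∀ j, c j ∈ insert 0 Sys.tangible) ∧
        (∀ j, n ≤ j → c j = 0) ∧
        (∀ k, n - m ≤ k → k < n →
          Sys.surp 0 (P (k + 1) * a ^ (k + 1) + c (k + 1) + Sys.neg (c k))) ∧
        Sys.surp 0 (c (n - m) + ∑ j ∈ Finset.range (n - m + 1), P j * a ^ j) := by
      intro m
      induction m with
      | zero =>
        intro _
        refine ⟨fun _ => 0, fun j => Set.mem_insert 0 _, fun j _ => rfl,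
          fun k hk hk' => absurd hk' (by omega), ?_⟩
        simpa using hroot'
      | succ m ih =>
        intro hm
        obtain ⟨c, hmem, htop, hrel, hinv⟩ := ih (by omega)
        have hk0' : n - m = (n - (m + 1)) + 1 := by omega
        have hinv' : Sys.surp 0 (P (n - (m + 1) + 1) * a ^ (n - (m + 1) + 1) +
            c (n - (m + 1) + 1) +
            ∑ j ∈ Finset.range (n - (m + 1) + 1), P j * a ^ j) := by
          have h := hinv
          rw [hk0', Finset.sum_range_succ] at h
          rwa [show P (n - (m + 1) + 1) * a ^ (n - (m + 1) + 1) + c (n - (m + 1) + 1) +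
              ∑ j ∈ Finset.range (n - (m + 1) + 1), P j * a ^ j
            = c (n - (m + 1) + 1) + ((∑ j ∈ Finset.range (n - (m + 1) + 1), P j * a ^ j) +
              P (n - (m + 1) + 1) * a ^ (n - (m + 1) + 1)) from by ring]
        have hbal : Sys.nabla
            (P (n - (m + 1) + 1) * a ^ (n - (m + 1) + 1) + c (n - (m + 1) + 1))
            (Sys.neg (∑ j ∈ Finset.range (n - (m + 1) + 1), P j * a ^ j)) := by
          unfold SemiringSystem.nabla
          rw [Sys.neg_neg]
          exact hinv'
        obtain ⟨d, hdmem, hd1, hd2⟩ := tb _ _ hbal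
        refine ⟨fun j => if j = n - (m + 1) then d else c j, ?_, ?_, ?_, ?_⟩
        · intro j; dsimp only; split
          · exact hdmem
          · exact hmem j
        · intro j hj
          have hne : j ≠ n - (m + 1) := by omega
          dsimp only; rw [if_neg hne]; exact htop j hj
        · intro k hk hk'
          dsimp only
          rcases eq_or_lt_of_le hk with heq | hlt
          · rw [if_neg (by omega : k + 1 ≠ n - (m + 1)), if_pos heq.symm]
            have h := hd1
            unfold SemiringSystem.nabla at h
            rw [← heq]
            exact h
          · rw [if_neg (by omega : k + 1 ≠ n - (m + 1)), if_neg (by omega : k ≠ n - (m + 1))]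
            exact hrel k (by omega) hk'
        · dsimp only
          rw [if_pos rfl]
          have h := hd2
          unfold SemiringSystem.nabla at h
          rwa [Sys.neg_neg] at h
    obtain ⟨c, hmem, htop, hrel, hinv⟩ := key n le_rfl
    have hrel' : ∀ k, k < n →
        Sys.surp 0 (P (k + 1) * a ^ (k + 1) + c (k + 1) + Sys.neg (c k)) :=
      fun k hk => hrel k (by omega) hk
    simp only [Nat.sub_self, zero_add, Finset.sum_range_one, pow_zero, mul_one] at hinv
    -- hinv : Sys.surp 0 (c 0 + P 0)
    refine ⟨a ^ n, hpow n haT, fun k => if k < n then a ^ (n - 1 - k) * c k else 0,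
      ?_, ⟨n, ?_⟩, ?_, ?_⟩
    · intro k
      dsimp only
      by_cases h : k < n
      · rw [if_pos h]
        rcases Set.mem_insert_iff.mp (hmem k) with h0 | hT
        · rw [h0, mul_zero]; exact Set.mem_insert 0 _
        · exact Set.mem_insert_of_mem _ (Sys.mul_mem (hpow _ haT) hT)
      · rw [if_neg h]; exact Set.mem_insert 0 _
    · intro k hk
      dsimp only
      rw [if_neg (by omega)]
    · intro k hk
      unfold SemiringSystem.nabla
      dsimp only
      by_cases hkn : k < n
      · rw [if_pos (by omega : k - 1 < n), if_pos hkn]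
        rw [Sys.neg_add, hneg_mul' (a ^ (n - 1 - (k - 1))) (c (k - 1)),
          Sys.neg_mul, Sys.neg_neg]
        rw [show n - 1 - (k - 1) = n - k from by omega]
        rw [show a * (a ^ (n - 1 - k) * c k) = a ^ (n - k) * c k from by
          rw [← mul_assoc, ← pow_succ', show n - 1 - k + 1 = n - k from by omega]]
        have h := Sys.surp_mul (a ^ (n - k)) (hrel' (k - 1) (by omega))
        rw [zero_mul, show k - 1 + 1 = k from by omega] at h
        have hp : a ^ k * a ^ (n - k) = a ^ n := by
          rw [← pow_add, show k + (n - k) = n from by omega]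
        have e3 : (P k * a ^ k + c k + Sys.neg (c (k - 1))) * a ^ (n - k)
            = a ^ n * P k + (a ^ (n - k) * Sys.neg (c (k - 1)) + a ^ (n - k) * c k) := by
          rw [← hp]; ring
        rw [e3] at h
        exact h
      · by_cases hkeq : k = n
        · subst hkeq
          rw [if_pos (by omega : k - 1 < k), if_neg (lt_irrefl k), mul_zero, add_zero]
          rw [show k - 1 - (k - 1) = 0 from by omega, pow_zero, one_mul]
          have h := hrel' (k - 1) (by omega)
          rw [show k - 1 + 1 = k from by omega, htop k le_rfl, add_zero] at h
          rwa [mul_comm (a ^ k) (P k)]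
        · have hk' : n < k := by omega
          rw [if_neg (by omega : ¬ k - 1 < n), if_neg hkn, hPdeg k hk']
          simp only [mul_zero, zero_add, add_zero, Sys.neg_zero]
          exact Sys.surp_refl 0
    · unfold SemiringSystem.nabla
      dsimp only
      by_cases hn : 0 < n
      · rw [if_pos hn, Sys.neg_mul, Sys.neg_neg, ← mul_assoc, ← pow_succ',
          show n - 1 - 0 + 1 = n from by omega]
        have h := Sys.surp_mul (a ^ n) hinv
        rw [zero_mul] at h
        rwa [show a ^ n * P 0 + a ^ n * c 0 = (c 0 + P 0) * a ^ n from by ring]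
      · rw [if_neg hn, mul_zero, Sys.neg_zero, add_zero,
          show n = 0 from by omega, pow_zero, one_mul]
        rw [htop 0 (by omega), zero_add] at hinv
        exact hinv
end
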